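/- Let G be a finite abelian group, let 𝔇 : G → Ĝ be a group isomorphism, let d be odd, and let L ∈ ℤ^{1×d} be a matrix all of whose coefficients are coprime to |G|. Then for every f : G → [0,1], t_L(f) + t_L(1−f) = (E(f))^d + (1 − E(f))^d. -/

import Mathlib

open Finset

variable {G : Type*} [AddCommGroup G] [Fintype G] [DecidableEq G]

/-- The configuration `C(L)` given by a matrix `L ∈ ℤ^{1×d}`: the kernel in `G^d` of the
induced map `v ↦ ∑ i, L 0 i • v i`. -/
def config {d : ℕ} (L : Matrix (Fin 1) (Fin d) ℤ) : Finset (Fin d → G) :=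
  Finset.univ.filter fun v => ∑ i, L 0 i • v i = 0

/-- The arithmetic multiplicity `t_L(f)`. -/
noncomputable def tL {d : ℕ} (L : Matrix (Fin 1) (Fin d) ℤ) (f : G → ℝ) : ℝ :=
  (∑ v ∈ config L, ∏ i, f (v i)) / ((config (G := G) L).card : ℝ)

/-- The average `E(f)` of `f` over `G`. -/
noncomputable def avg (f : G → ℝ) : ℝ := (∑ x, f x) / (Fintype.card G : ℝ)

/-- `L` admits a canceling partition in `G`: a partition of the index set into (distinct) pairs,
encoded by a fixed-point-free involution `σ`, such that for each pair `{i, σ i}` the pair of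
coefficients `(L 0 i, L 0 (σ i))` is canceling in `G`, i.e. their sum acts trivially on `G`. -/
def HasCancelingPartition (G : Type*) [AddCommGroup G] {d : ℕ}
    (L : Matrix (Fin 1) (Fin d) ℤ) : Prop :=
  ∃ σ : Equiv.Perm (Fin d), (∀ i, σ i ≠ i) ∧ (∀ i, σ (σ i) = i) ∧
    ∀ i, ∀ x : G, (L 0 i + L 0 (σ i)) • x = 0

/-- The Fourier transform `f̂(γ) = (1/|G|) ∑ x, γ(x) f(x)` of `f : G → ℝ` at a character `γ` of
`G` (characters of the finite abelian group `G` are represented as `AddChar G ℂ`; they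
automatically take values on the unit circle). -/
noncomputable def ft (f : G → ℝ) (γ : AddChar G ℂ) : ℂ :=
  (∑ x, γ x * (f x : ℂ)) / (Fintype.card G : ℂ)

/-! By orthogonality of characters,
`|G| · ∑_{v ∈ C(L)} ∏ᵢ h(vᵢ) = ∑_ψ ∏ᵢ ∑ₓ ψ(Lᵢ x) h(x)`.
As each `Lᵢ` is coprime to `|G|`, `x ↦ Lᵢ x` permutes `G`, so for a nontrivial `ψ` the inner sums
for `1 - f` are the negatives of those for `f`; `d` being odd, the two products cancel. Only the
trivial character survives, contributing `(∑ f)^d + (|G| - ∑ f)^d`, and the same computation with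
`h = 1` gives `|C(L)| · |G| = |G|^d`. -/

lemma AddChar.map_sum_eq_prod {ι A M : Type*} [AddCommMonoid A] [CommMonoid M]
    (ψ : AddChar A M) (s : Finset ι) (v : ι → A) :
    ψ (∑ i ∈ s, v i) = ∏ i ∈ s, ψ (v i) :=
  map_prod ψ.toMonoidHom (fun i => Multiplicative.ofAdd (v i)) s

lemma IsCoprime.zsmul_bijective {A : Type*} [AddCommGroup A] [Fintype A] {c : ℤ}
    (hc : IsCoprime c (Fintype.card A)) : Function.Bijective (fun x : A => c • x) := by
  obtain ⟨u, v, huv⟩ := hc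
  refine Finite.injective_iff_bijective.mp (Function.LeftInverse.injective (g := (u • ·)) ?_)
  intro x
  calc u • c • x = (u * c + v * Fintype.card A) • x := by
        rw [add_smul, mul_smul, mul_smul, natCast_zsmul, card_nsmul_eq_zero, smul_zero, add_zero]
    _ = x := by rw [huv, one_smul]

section Characters

variable {A : Type*} [AddCommGroup A] [Fintype A] {ψ : AddChar A ℂ} {c : ℤ}

lemma AddChar.sum_apply_zsmul_eq_zero (hψ : ψ ≠ 0) (hc : IsCoprime c (Fintype.card A)) :
    ∑ x, ψ (c • x) = 0 :=
  (hc.zsmul_bijective.sum_comp ψ).trans (AddChar.sum_eq_zero_iff_ne_zero.2 hψ)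

lemma AddChar.sum_apply_zsmul_mul_one_sub (hψ : ψ ≠ 0) (hc : IsCoprime c (Fintype.card A))
    (h : A → ℂ) : ∑ x, ψ (c • x) * (1 - h x) = -∑ x, ψ (c • x) * h x := by
  simp only [mul_one_sub, sum_sub_distrib, AddChar.sum_apply_zsmul_eq_zero hψ hc, zero_sub]

end Characters

lemma sum_config_prod_mul_card {d : ℕ} (L : Matrix (Fin 1) (Fin d) ℤ) (h : G → ℂ) :
    (∑ v ∈ config L, ∏ i, h (v i)) * Fintype.card G
      = ∑ ψ : AddChar G ℂ, ∏ i, ∑ x, ψ (L 0 i • x) * h x := by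
  calc (∑ v ∈ config L, ∏ i, h (v i)) * Fintype.card G
      = ∑ v : Fin d → G, (∑ ψ : AddChar G ℂ, ψ (∑ i, L 0 i • v i)) * ∏ i, h (v i) := by
        simp only [AddChar.sum_apply_eq_ite, ite_mul, zero_mul, ← sum_filter, config, sum_mul]
        exact sum_congr rfl fun _ _ => mul_comm _ _
    _ = ∑ ψ : AddChar G ℂ, ∑ v : Fin d → G, ∏ i, ψ (L 0 i • v i) * h (v i) := by
        rw [sum_comm]
        simp only [sum_mul, AddChar.map_sum_eq_prod, prod_mul_distrib]
    _ = ∑ ψ : AddChar G ℂ, ∏ i, ∑ x, ψ (L 0 i • x) * h x := by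
        simp only [Fintype.prod_sum]

section CoprimeCoefficients

variable {d : ℕ} {L : Matrix (Fin 1) (Fin d) ℤ}

lemma card_config_mul_card (hd : 0 < d) (hcop : ∀ i, IsCoprime (L 0 i) (Fintype.card G)) :
    (config (G := G) L).card * Fintype.card G = Fintype.card G ^ d := by
  have key := sum_config_prod_mul_card (G := G) L (fun _ => 1)
  rw [sum_eq_single (0 : AddChar G ℂ)] at key
  · simp only [prod_const_one, sum_const, card_univ, nsmul_eq_mul, mul_one, AddChar.zero_apply,
      prod_const, Fintype.card_fin] at key
    exact_mod_cast key
  · intro ψ _ hψ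
    simpa using prod_eq_zero (mem_univ ⟨0, hd⟩) (AddChar.sum_apply_zsmul_eq_zero hψ (hcop _))
  · simp

lemma sum_config_prod_add_sum_config_prod_one_sub (hd : Odd d)
    (hcop : ∀ i, IsCoprime (L 0 i) (Fintype.card G)) (h : G → ℂ) :
    (∑ v ∈ config L, ∏ i, h (v i) + ∑ v ∈ config L, ∏ i, (1 - h (v i))) * Fintype.card G
      = (∑ x, h x) ^ d + (Fintype.card G - ∑ x, h x) ^ d := by
  rw [add_mul, sum_config_prod_mul_card, sum_config_prod_mul_card L (fun x => 1 - h x),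
    ← sum_add_distrib, sum_eq_single 0]
  · simp [sum_sub_distrib]
  · intro ψ _ hψ
    simp only [AddChar.sum_apply_zsmul_mul_one_sub hψ (hcop _), prod_neg, card_univ,
      Fintype.card_fin, hd.neg_one_pow]
    ring
  · simp

end CoprimeCoefficients

theorem odd_double_density_general {d : ℕ} (L : Matrix (Fin 1) (Fin d) ℤ)
    (hd : Odd d)
    (hcop : ∀ i, IsCoprime (L 0 i) (Fintype.card G : ℤ))
    (f : G → ℝ) :
    tL L f + tL L (fun x => 1 - f x) = (avg f) ^ d + (1 - avg f) ^ d := by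
  have hN : (Fintype.card G : ℝ) ≠ 0 := Nat.cast_ne_zero.2 Fintype.card_ne_zero
  have hcard : ((config (G := G) L).card : ℝ) * Fintype.card G = Fintype.card G ^ d := by
    exact_mod_cast card_config_mul_card hd.pos hcop
  have hsum : (∑ v ∈ config L, ∏ i, f (v i) + ∑ v ∈ config L, ∏ i, (1 - f (v i)))
      * Fintype.card G = (∑ x, f x) ^ d + (Fintype.card G - ∑ x, f x) ^ d := by
    exact_mod_cast sum_config_prod_add_sum_config_prod_one_sub hd hcop (fun x => (f x : ℂ))
  calc tL L f + tL L (fun x => 1 - f x)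
      = (∑ v ∈ config L, ∏ i, f (v i) + ∑ v ∈ config L, ∏ i, (1 - f (v i))) * Fintype.card G
          / ((config (G := G) L).card * Fintype.card G) := by
        rw [tL, tL, ← add_div, mul_div_mul_right _ _ hN]
    _ = ((∑ x, f x) ^ d + (Fintype.card G - ∑ x, f x) ^ d) / Fintype.card G ^ d := by
        rw [hsum, hcard]
    _ = (avg f) ^ d + (1 - avg f) ^ d := by
        rw [avg, one_sub_div hN, div_pow, div_pow, add_div]

/-- For odd `d` and `L ∈ ℤ^{1×d}` with all coefficients coprime to `|G|`, for every
`f : G → [0,1]` one has `t_L(f) + t_L(1−f) = E(f)^d + (1 − E(f))^d`. -/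
theorem odd_double_density {d : ℕ} (L : Matrix (Fin 1) (Fin d) ℤ)
    (𝔇 : Multiplicative G ≃* AddChar G ℂ)
    (hd : Odd d)
    (hcop : ∀ i, IsCoprime (L 0 i) (Fintype.card G : ℤ))
    (f : G → ℝ) (hf : ∀ x, f x ∈ Set.Icc (0 : ℝ) 1) :
    tL L f + tL L (fun x => 1 - f x) = (avg f) ^ d + (1 - avg f) ^ d :=
  odd_double_density_general L hd hcop f
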